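/- arXiv:2005.13141 — 4 statements merged into one kernel-verified Lean document; each statement's English description precedes it below -/
import Mathlib

section
/- Let E be a real normed vector space, let μ ∈ (0, 1/2], and define φ(a, b) = (1 − μ)a + μb. Then for all a, b, c ∈ E, ‖φ(a, b) − c‖ + ‖φ(b, a) − c‖ ≤ ‖a − c‖ + ‖b − c‖ − 2‖φ(a, b) − a‖ + ‖a + b − 2c‖. -/
/-- Lemma 1 (second triangle inequality) in Lanchier–Li: for `μ ∈ (0, 1/2]` and
`φ (a, b) = (1 - μ) a + μ b`, one has
`‖φ(a,b) - c‖ + ‖φ(b,a) - c‖ ≤ ‖a - c‖ + ‖b - c‖ - 2 ‖φ(a,b) - a‖ + ‖a + b - 2c‖`. -/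
theorem deffuant_triangle_inequality_two
    (E : Type*) [NormedAddCommGroup E] [NormedSpace ℝ E]
    (μ : ℝ) (hμ0 : 0 < μ) (hμ2 : μ ≤ 1 / 2)
    (φ : E → E → E) (hφ : ∀ a b, φ a b = (1 - μ) • a + μ • b)
    (a b c : E) :
    ‖φ a b - c‖ + ‖φ b a - c‖
      ≤ ‖a - c‖ + ‖b - c‖ - 2 * ‖φ a b - a‖ + ‖a + b - 2 • c‖ := by
  have h1 : φ a b - c = (1 - 2*μ) • (a - c) + μ • (a + b - 2 • c) := by
    rw [hφ]; module
  have h2 : φ b a - c = (1 - 2*μ) • (b - c) + μ • (a + b - 2 • c) := by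
    rw [hφ]; module
  have h3 : φ a b - a = μ • (b - a) := by
    rw [hφ]; module
  have t1 := norm_add_le ((1 - 2*μ) • (a - c)) (μ • (a + b - 2 • c))
  have t2 := norm_add_le ((1 - 2*μ) • (b - c)) (μ • (a + b - 2 • c))
  have t3 : ‖b - a‖ ≤ ‖a - c‖ + ‖b - c‖ := by
    have h := norm_sub_le (b - c) (a - c)
    have : b - c - (a - c) = b - a := by abel
    rw [this] at h
    linarith
  have hμ' : (0:ℝ) ≤ 1 - 2*μ := by linarith
  rw [h1, h2, h3] at *
  simp only [norm_smul] at t1 t2 ⊢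
  simp only [Real.norm_eq_abs, abs_of_nonneg hμ', abs_of_pos hμ0] at t1 t2 ⊢
  nlinarith [norm_nonneg (a + b - 2 • c)]
end

section
/- Let ‖·‖ be a norm on ℝ^d, let μ ∈ (0, 1/2], let ε > 0, and define φ(a, b) = (1 − μ)a + μb. If a, b, c ∈ ℝ^d satisfy ‖φ(a, b) − a‖ ≥ ε and ‖(a + b)/2 − c‖ ≤ ε/2, then ‖φ(a, b) − c‖ + ‖φ(b, a) − c‖ ≤ ‖a − c‖ + ‖b − c‖ − ε. -/
/-- Quantitative decrease (used in the proof of Lemma 3 of Lanchier–Li): if an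
interaction moves the opinion at a vertex by at least `ε` and `c` is within
distance `ε / 2` of the midpoint `(a + b) / 2`, then the cumulative disagreement
with `c` decreases by at least `ε`. -/
theorem deffuant_quantitative_decrease
    (d : ℕ) (nrm : (Fin d → ℝ) → ℝ)
    (nrm_smul : ∀ (t : ℝ) (v : Fin d → ℝ), nrm (t • v) = |t| * nrm v)
    (nrm_triangle : ∀ v w : Fin d → ℝ, nrm (v + w) ≤ nrm v + nrm w)
    (nrm_eq_zero : ∀ v : Fin d → ℝ, nrm v = 0 → v = 0)
    (μ : ℝ) (hμ0 : 0 < μ) (hμ2 : μ ≤ 1 / 2) (ε : ℝ) (hε : 0 < ε)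
    (φ : (Fin d → ℝ) → (Fin d → ℝ) → (Fin d → ℝ))
    (hφ : ∀ a b, φ a b = (1 - μ) • a + μ • b)
    (a b c : Fin d → ℝ)
    (hjump : ε ≤ nrm (φ a b - a)) (hmid : nrm ((2 : ℝ)⁻¹ • (a + b) - c) ≤ ε / 2) :
    nrm (φ a b - c) + nrm (φ b a - c) ≤ nrm (a - c) + nrm (b - c) - ε := by
  set m : Fin d → ℝ := (2 : ℝ)⁻¹ • (a + b) with hm
  have hμhalf : (0 : ℝ) ≤ 1 / 2 - μ := by linarith
  set N : ℝ := nrm (a - b) with hN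
  -- the jump has size μ * ‖b - a‖ = μ * N
  have hba : nrm (b - a) = N := by
    have h1 : b - a = (-1 : ℝ) • (a - b) := by module
    rw [h1, nrm_smul]; simp [hN]
  have h1 : φ a b - a = μ • (b - a) := by rw [hφ]; module
  have hjump' : ε ≤ μ * N := by
    rw [h1, nrm_smul, abs_of_pos hμ0, hba] at hjump; exact hjump
  -- bound on nrm (φ a b - c)
  have hA : nrm (φ a b - c) ≤ (1 / 2 - μ) * N + ε / 2 := by
    have hdec : φ a b - c = (1 / 2 - μ) • (a - b) + (m - c) := by
      rw [hφ, hm]; module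
    calc nrm (φ a b - c) ≤ nrm ((1 / 2 - μ) • (a - b)) + nrm (m - c) := by
          rw [hdec]; exact nrm_triangle _ _
      _ ≤ (1 / 2 - μ) * N + ε / 2 := by
          rw [nrm_smul, abs_of_nonneg hμhalf]
          exact add_le_add le_rfl hmid
  have hB : nrm (φ b a - c) ≤ (1 / 2 - μ) * N + ε / 2 := by
    have hdec : φ b a - c = (1 / 2 - μ) • (b - a) + (m - c) := by
      rw [hφ, hm]; module
    calc nrm (φ b a - c) ≤ nrm ((1 / 2 - μ) • (b - a)) + nrm (m - c) := by
          rw [hdec]; exact nrm_triangle _ _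
      _ ≤ (1 / 2 - μ) * N + ε / 2 := by
          rw [nrm_smul, abs_of_nonneg hμhalf, hba]
          exact add_le_add le_rfl hmid
  -- triangle inequality: N ≤ ‖a - c‖ + ‖b - c‖
  have hT : N ≤ nrm (a - c) + nrm (b - c) := by
    have hdec : a - b = (a - c) + (-1 : ℝ) • (b - c) := by module
    calc N = nrm ((a - c) + (-1 : ℝ) • (b - c)) := by rw [hN, hdec]
      _ ≤ nrm (a - c) + nrm ((-1 : ℝ) • (b - c)) := nrm_triangle _ _
      _ = nrm (a - c) + nrm (b - c) := by rw [nrm_smul]; simp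
  have hring : (1 / 2 - μ) * N + (1 / 2 - μ) * N = N - 2 * (μ * N) := by ring
  linarith
end

section
/- In the multivariate Deffuant model, for every ε > 0 there exists an almost surely finite random time N = N(ε) such that ‖ξ_{n+1}(x) − ξ_n(x)‖ < ε for all n ≥ N and all x ∈ V; that is, almost surely the jumps of the opinion at every vertex are eventually smaller than ε. -/
/-- Lemma 3 of Lanchier–Li: in the multivariate Deffuant model, for every `ε > 0`,
almost surely there is a finite time after which every opinion jump is smaller
than `ε`. -/
theorem deffuant_jumps_eventually_small
    (Ω : Type) [MeasurableSpace Ω]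
    (P : MeasureTheory.Measure Ω) [MeasureTheory.IsProbabilityMeasure P]
    (d : ℕ) (nrm : (Fin d → ℝ) → ℝ)
    (nrm_smul : ∀ (t : ℝ) (v : Fin d → ℝ), nrm (t • v) = |t| * nrm v)
    (nrm_triangle : ∀ v w : Fin d → ℝ, nrm (v + w) ≤ nrm v + nrm w)
    (nrm_eq_zero : ∀ v : Fin d → ℝ, nrm v = 0 → v = 0)
    -- the opinion space: a bounded convex subset of ℝ^d
    (Δ : Set (Fin d → ℝ)) (hΔconv : Convex ℝ Δ) (hΔbdd : Bornology.IsBounded Δ)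
    -- the social network: a finite connected graph
    (V : Type) [Fintype V] [DecidableEq V] [MeasurableSpace V] [MeasurableSingletonClass V]
    (G : SimpleGraph V) [DecidableRel G.Adj] (hG : G.Connected)
    -- confidence threshold and convergence parameter
    (τ : ℝ) (hτ : 0 < τ) (μ : ℝ) (hμ0 : 0 < μ) (hμ2 : μ ≤ 1 / 2)
    -- the process `ξ` and the sequence `e` of randomly selected edges
    (ξ : ℕ → V → Ω → (Fin d → ℝ)) (e : ℕ → Ω → V × V)
    (hmeasξ : ∀ n x, Measurable (ξ n x)) (hmease : ∀ n, Measurable (e n))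
    -- the initial opinions take values in Δ, are i.i.d. with common law `μX`
    (hξ0 : ∀ x ω, ξ 0 x ω ∈ Δ)
    (μX : MeasureTheory.Measure (Fin d → ℝ))
    (hlaw : ∀ x, MeasureTheory.Measure.map (ξ 0 x) P = μX)
    -- each step an edge is chosen uniformly at random, independently of the past
    -- and of the initial opinions
    (hedge_adj : ∀ n ω, G.Adj (e n ω).1 (e n ω).2)
    (hedge_unif : ∀ (n : ℕ) (p : V × V), G.Adj p.1 p.2 →
      P {ω | e n ω = p}
        = 1 / ((Finset.univ.filter fun q : V × V => G.Adj q.1 q.2).card : ENNReal))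
    (hindep : ProbabilityTheory.iIndepFun
      (β := fun i : V ⊕ ℕ => match i with
        | Sum.inl _ => Fin d → ℝ
        | Sum.inr _ => V × V)
      (m := fun i => match i with
        | Sum.inl _ => inferInstance
        | Sum.inr _ => inferInstance)
      (fun i => match i with
        | Sum.inl x => ξ 0 x
        | Sum.inr n => e n) P)
    -- the dynamics: neighbors interact if and only if their opinion distance does
    -- not exceed the confidence threshold, resulting in partial averaging
    (hdyn : ∀ (n : ℕ) (ω : Ω),
      (nrm (ξ n (e n ω).1 ω - ξ n (e n ω).2 ω) ≤ τ →
        ξ (n + 1) (e n ω).1 ω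
            = ξ n (e n ω).1 ω + μ • (ξ n (e n ω).2 ω - ξ n (e n ω).1 ω) ∧
          ξ (n + 1) (e n ω).2 ω
            = ξ n (e n ω).2 ω + μ • (ξ n (e n ω).1 ω - ξ n (e n ω).2 ω) ∧
          ∀ z, z ≠ (e n ω).1 → z ≠ (e n ω).2 → ξ (n + 1) z ω = ξ n z ω) ∧
      (τ < nrm (ξ n (e n ω).1 ω - ξ n (e n ω).2 ω) →
        ∀ z, ξ (n + 1) z ω = ξ n z ω))
    :
    ∀ ε : ℝ, 0 < ε →
      ∀ᵐ ω ∂P, ∃ N : ℕ, ∀ n ≥ N, ∀ x : V, nrm (ξ (n + 1) x ω - ξ n x ω) < ε := by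
  intro ε hε
  refine MeasureTheory.ae_of_all P ?_
  intro ω
  -- basic facts about the norm
  have nrm_zero : nrm 0 = 0 := by
    have h := nrm_smul 0 0
    simpa using h
  have nrm_neg : ∀ v : Fin d → ℝ, nrm (-v) = nrm v := by
    intro v
    have h := nrm_smul (-1) v
    simpa using h
  have nrm_nonneg : ∀ v : Fin d → ℝ, 0 ≤ nrm v := by
    intro v
    have h := nrm_triangle v (-v)
    rw [add_neg_cancel, nrm_zero, nrm_neg] at h
    linarith
  have nrm_sum_le : ∀ (s : Finset (Fin d)) (g : Fin d → Fin d → ℝ),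
      nrm (∑ i ∈ s, g i) ≤ ∑ i ∈ s, nrm (g i) := by
    intro s g
    induction s using Finset.cons_induction with
    | empty => simp [nrm_zero]
    | cons i s hi ih =>
      rw [Finset.sum_cons, Finset.sum_cons]
      exact le_trans (nrm_triangle _ _) (by linarith)
  set C : ℝ := ∑ i : Fin d, nrm (Pi.single i 1) with hCdef
  have hC0 : 0 ≤ C := Finset.sum_nonneg fun i _ => nrm_nonneg _
  have nrm_sq_le : ∀ v : Fin d → ℝ, (nrm v)^2 ≤ C^2 * ∑ i, (v i)^2 := by
    intro v
    have hS0 : 0 ≤ ∑ i, (v i)^2 := Finset.sum_nonneg fun i _ => sq_nonneg _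
    have habs : ∀ i, |v i| ≤ Real.sqrt (∑ i, (v i)^2) := by
      intro i
      rw [← Real.sqrt_sq_eq_abs]
      exact Real.sqrt_le_sqrt
        (Finset.single_le_sum (fun j _ => sq_nonneg (v j)) (Finset.mem_univ i))
    have h1 : nrm v ≤ Real.sqrt (∑ i, (v i)^2) * C := by
      have hv : ∑ i : Fin d, (v i) • (Pi.single i (1:ℝ) : Fin d → ℝ) = v := by
        have h : ∀ i : Fin d, (v i) • (Pi.single i (1:ℝ) : Fin d → ℝ)
            = (Pi.single i (v i) : Fin d → ℝ) := by
          intro i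
          funext j
          by_cases hji : j = i
          · subst hji; simp
          · simp [Pi.single_apply, hji]
        simp_rw [h]
        exact Finset.univ_sum_single v
      calc nrm v = nrm (∑ i : Fin d, (v i) • (Pi.single i (1:ℝ) : Fin d → ℝ)) := by rw [hv]
        _ ≤ ∑ i, nrm ((v i) • (Pi.single i (1:ℝ) : Fin d → ℝ)) := nrm_sum_le _ _
        _ = ∑ i, |v i| * nrm (Pi.single i (1:ℝ)) :=
            Finset.sum_congr rfl fun i _ => nrm_smul _ _
        _ ≤ ∑ i, Real.sqrt (∑ i, (v i)^2) * nrm (Pi.single i (1:ℝ)) :=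
            Finset.sum_le_sum fun i _ =>
              mul_le_mul_of_nonneg_right (habs i) (nrm_nonneg _)
        _ = Real.sqrt (∑ i, (v i)^2) * C := by rw [Finset.mul_sum]
    have h2 : (nrm v)^2 ≤ (Real.sqrt (∑ i, (v i)^2) * C)^2 :=
      pow_le_pow_left₀ (nrm_nonneg v) h1 2
    calc (nrm v)^2 ≤ (Real.sqrt (∑ i, (v i)^2) * C)^2 := h2
      _ = (Real.sqrt (∑ i, (v i)^2))^2 * C^2 := by ring
      _ = C^2 * ∑ i, (v i)^2 := by rw [Real.sq_sqrt hS0]; ring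
  rcases eq_or_lt_of_le hC0 with hC | hC
  · -- degenerate case: the norm is identically zero
    refine ⟨0, fun n _ x => ?_⟩
    have h := nrm_sq_le (ξ (n+1) x ω - ξ n x ω)
    rw [← hC] at h
    simp only [ne_eq, OfNat.ofNat_ne_zero, not_false_eq_true, zero_pow, zero_mul] at h
    nlinarith [nrm_nonneg (ξ (n+1) x ω - ξ n x ω)]
  -- main case: C > 0
  set δ : ℝ := ε^2 / (μ * C^2) with hδdef
  have hδ : 0 < δ := by positivity
  set W : ℕ → ℝ := fun n => ∑ x : V, ∑ i, (ξ n x ω i)^2 with hWdef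
  have hWnonneg : ∀ n, 0 ≤ W n := fun n =>
    Finset.sum_nonneg fun x _ => Finset.sum_nonneg fun i _ => sq_nonneg _
  have hstep : ∀ n : ℕ, W (n+1) ≤ W n ∧
      ((∃ x, ε ≤ nrm (ξ (n+1) x ω - ξ n x ω)) → W (n+1) ≤ W n - δ) := by
    intro n
    by_cases hint : nrm (ξ n (e n ω).1 ω - ξ n (e n ω).2 ω) ≤ τ
    · obtain ⟨h1, h2, h3⟩ := (hdyn n ω).1 hint
      have hne : (e n ω).1 ≠ (e n ω).2 := (hedge_adj n ω).ne
      set x₁ := (e n ω).1 with hx₁def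
      set y := (e n ω).2 with hydef
      set S : ℝ := ∑ i, (ξ n x₁ ω i - ξ n y ω i)^2 with hSdef
      have hS0 : 0 ≤ S := Finset.sum_nonneg fun i _ => sq_nonneg _
      have hD : ∑ x : V, ((∑ i, (ξ (n+1) x ω i)^2) - (∑ i, (ξ n x ω i)^2))
          = -(2*μ*(1-μ)*S) := by
        rw [← Finset.sum_subset (Finset.subset_univ ({x₁, y} : Finset V))]
        · rw [Finset.sum_pair hne, h1, h2]
          have heq : ((∑ i, ((ξ n x₁ ω + μ • (ξ n y ω - ξ n x₁ ω)) i)^2)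
                - (∑ i, (ξ n x₁ ω i)^2))
              + ((∑ i, ((ξ n y ω + μ • (ξ n x₁ ω - ξ n y ω)) i)^2)
                - (∑ i, (ξ n y ω i)^2))
              = ∑ i, (-(2*μ*(1-μ)) * (ξ n x₁ ω i - ξ n y ω i)^2) := by
            rw [← Finset.sum_sub_distrib, ← Finset.sum_sub_distrib,
              ← Finset.sum_add_distrib]
            refine Finset.sum_congr rfl fun i _ => ?_
            simp only [Pi.add_apply, Pi.smul_apply, Pi.sub_apply, smul_eq_mul]
            ring
          rw [heq, ← Finset.mul_sum, ← hSdef]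
          ring
        · intro x _ hx
          rw [Finset.mem_insert, Finset.mem_singleton] at hx
          push_neg at hx
          rw [h3 x hx.1 hx.2, sub_self]
      rw [Finset.sum_sub_distrib] at hD
      have hkey : W (n+1) = W n - 2*μ*(1-μ)*S := by
        simp only [hWdef]
        linarith
      have hdrop0 : 0 ≤ 2*μ*(1-μ)*S := by
        have h1μ : (0:ℝ) ≤ 1 - μ := by linarith
        have := mul_nonneg (mul_nonneg (by linarith : (0:ℝ) ≤ 2*μ) h1μ) hS0
        linarith
      constructor
      · linarith
      · rintro ⟨x, hx⟩
        have hjump : ε ≤ μ * nrm (ξ n x₁ ω - ξ n y ω) := by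
          by_cases hxx : x = x₁
          · rw [hxx, h1] at hx
            have hv : ξ n x₁ ω + μ • (ξ n y ω - ξ n x₁ ω) - ξ n x₁ ω
                = μ • (ξ n y ω - ξ n x₁ ω) := by abel
            rw [hv, nrm_smul, abs_of_pos hμ0, ← neg_sub (ξ n x₁ ω) (ξ n y ω),
              nrm_neg] at hx
            exact hx
          · by_cases hxy : x = y
            · rw [hxy, h2] at hx
              have hv : ξ n y ω + μ • (ξ n x₁ ω - ξ n y ω) - ξ n y ω
                  = μ • (ξ n x₁ ω - ξ n y ω) := by abel
              rw [hv, nrm_smul, abs_of_pos hμ0] at hx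
              exact hx
            · rw [h3 x hxx hxy, sub_self, nrm_zero] at hx
              linarith
        have hsq := nrm_sq_le (ξ n x₁ ω - ξ n y ω)
        simp only [Pi.sub_apply] at hsq
        rw [← hSdef] at hsq
        set t : ℝ := nrm (ξ n x₁ ω - ξ n y ω) with htdef
        have ht0 : 0 ≤ t := nrm_nonneg _
        have he2 : ε^2 ≤ (μ * t)^2 := pow_le_pow_left₀ hε.le hjump 2
        have he3 : ε^2 ≤ μ^2 * (C^2 * S) := by nlinarith [sq_nonneg μ]
        have hδμ : δ * (μ * C^2) = ε^2 := by
          rw [hδdef]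
          field_simp
        have hμC : 0 < μ * C^2 := by positivity
        have hδS : δ ≤ μ * S := by nlinarith
        have hfin : δ ≤ 2*μ*(1-μ)*S := by
          nlinarith [mul_nonneg (mul_nonneg hμ0.le hS0)
            (by linarith : (0:ℝ) ≤ 1 - 2*μ)]
        linarith
    · have heq := (hdyn n ω).2 (lt_of_not_ge hint)
      have hWeq : W (n+1) = W n := by
        simp only [hWdef]
        exact Finset.sum_congr rfl fun x _ =>
          Finset.sum_congr rfl fun i _ => by rw [heq x]
      refine ⟨le_of_eq hWeq, ?_⟩
      rintro ⟨x, hx⟩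
      rw [heq x, sub_self, nrm_zero] at hx
      linarith
  have hanti : Antitone W := antitone_nat_of_succ_le fun n => (hstep n).1
  by_contra hcon
  push_neg at hcon
  have hclaim : ∀ k : ℕ, ∃ n, W n ≤ W 0 - k * δ := by
    intro k
    induction k with
    | zero => exact ⟨0, by simp⟩
    | succ k ih =>
      obtain ⟨n, hn⟩ := ih
      obtain ⟨m, hm, x, hx⟩ := hcon n
      have h1 : W (m+1) ≤ W m - δ := (hstep m).2 ⟨x, hx⟩
      have h2 : W m ≤ W n := hanti hm
      refine ⟨m+1, ?_⟩
      push_cast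
      linarith
  obtain ⟨k, hk⟩ := exists_nat_gt (W 0 / δ)
  obtain ⟨n, hn⟩ := hclaim k
  have hk' : W 0 < k * δ := by rwa [div_lt_iff₀ hδ] at hk
  linarith [hWnonneg n]
end

section
/- Let d ≥ 1, let ‖·‖ be a norm on ℝ^d, let c ∈ ℝ^d, r > 0, and let B(c, s) = { a ∈ ℝ^d : ‖a − c‖ < s } denote open balls with respect to this norm. Then, with λ denoting Lebesgue measure on ℝ^d, for every 0 < s ≤ r, ∫_{B(c,s)} (r − ‖a − c‖) dλ(a) / ∫_{B(c,r)} (r − ‖a − c‖) dλ(a) = (s/r)^d · (1 + d(1 − s/r)); that is, if X has density proportional to r − ‖a − c‖ on B(c, r), then P(‖X − c‖ < s) = (s/r)^d (1 + d(1 − s/r)). -/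
open MeasureTheory

section Aux
open Set Pointwise

variable {d : ℕ} (nrm : (Fin d → ℝ) → ℝ)
  (nrm_smul : ∀ (t : ℝ) (v : Fin d → ℝ), nrm (t • v) = |t| * nrm v)
  (nrm_triangle : ∀ v w : Fin d → ℝ, nrm (v + w) ≤ nrm v + nrm w)

include nrm_smul in
private lemma nrm_zero' : nrm 0 = 0 := by
  have := nrm_smul 0 0; simpa using this

include nrm_smul nrm_triangle in
private lemma nrm_nonneg' (v : Fin d → ℝ) : 0 ≤ nrm v := by
  have h0 : nrm 0 = 0 := nrm_zero' nrm nrm_smul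
  have hneg : nrm (-v) = nrm v := by
    have := nrm_smul (-1) v; simpa using this
  have := nrm_triangle v (-v)
  simp [h0, hneg] at this
  linarith

include nrm_smul nrm_triangle in
private lemma nrm_lipschitz' :
    LipschitzWith (Real.toNNReal (∑ i, nrm (Pi.single i 1))) nrm := by
  apply LipschitzWith.of_dist_le_mul
  intro v w
  have hub : ∀ x : Fin d → ℝ, nrm x ≤ ∑ i, |x i| * nrm (Pi.single i 1) := by
    intro x
    have hx : x = ∑ i, x i • (Pi.single i 1 : Fin d → ℝ) := by
      ext j; simp [Pi.single_apply]
    calc nrm x = nrm (∑ i, x i • (Pi.single i 1 : Fin d → ℝ)) := by rw [← hx]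
      _ ≤ ∑ i, nrm (x i • (Pi.single i 1 : Fin d → ℝ)) :=
          Finset.le_sum_of_subadditive nrm (nrm_zero' nrm nrm_smul).le nrm_triangle _ _
      _ = ∑ i, |x i| * nrm (Pi.single i 1) := by simp [nrm_smul]
  have key : ∀ v w : Fin d → ℝ, nrm v - nrm w ≤ (∑ i, nrm (Pi.single i 1)) * dist v w := by
    intro v w
    have h1 : nrm v ≤ nrm (v - w) + nrm w := by
      have := nrm_triangle (v - w) w; simpa using this
    have h2 : nrm (v - w) ≤ ∑ i, |v i - w i| * nrm (Pi.single i 1) := by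
      simpa using hub (v - w)
    have h3 : ∑ i, |v i - w i| * nrm (Pi.single i 1) ≤ ∑ i, dist v w * nrm (Pi.single i 1) := by
      apply Finset.sum_le_sum
      intro i _
      have : |v i - w i| ≤ dist v w := by
        simpa [Real.dist_eq] using dist_le_pi_dist v w i
      exact mul_le_mul_of_nonneg_right this (nrm_nonneg' nrm nrm_smul nrm_triangle _)
    have h4 : ∑ i, dist v w * nrm (Pi.single i 1) = (∑ i, nrm (Pi.single i 1)) * dist v w := by
      rw [← Finset.mul_sum, mul_comm]
    linarith
  rw [Real.dist_eq, abs_sub_le_iff]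
  have hC : ((Real.toNNReal (∑ i, nrm (Pi.single i 1))) : ℝ) = ∑ i, nrm (Pi.single i 1) := by
    rw [Real.coe_toNNReal]
    exact Finset.sum_nonneg fun i _ => nrm_nonneg' nrm nrm_smul nrm_triangle _
  rw [hC]
  exact ⟨key v w, by simpa [dist_comm] using key w v⟩

private lemma nrm_lower_bound {d : ℕ} (hd : 1 ≤ d) (nrm : (Fin d → ℝ) → ℝ)
    (nrm_eq_zero : ∀ v : Fin d → ℝ, nrm v = 0 → v = 0)
    (nrm_smul : ∀ (t : ℝ) (v : Fin d → ℝ), nrm (t • v) = |t| * nrm v)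
    (hcont : Continuous nrm) (nn : ∀ v, 0 ≤ nrm v) :
    ∃ m : ℝ, 0 < m ∧ ∀ v : Fin d → ℝ, m * ‖v‖ ≤ nrm v := by
  haveI : Nontrivial (Fin d → ℝ) := by
    refine ⟨(Pi.single (⟨0, hd⟩ : Fin d) 1 : Fin d → ℝ), 0, ?_⟩
    intro h
    have := congrFun h ⟨0, hd⟩
    simp at this
  have hsne : (Metric.sphere (0 : Fin d → ℝ) 1).Nonempty :=
    NormedSpace.sphere_nonempty.mpr zero_le_one
  obtain ⟨v0, hv0mem, hv0min⟩ :=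
    (isCompact_sphere (0 : Fin d → ℝ) 1).exists_isMinOn hsne hcont.continuousOn
  have hv0norm : ‖v0‖ = 1 := by simpa using hv0mem
  have hv0ne : v0 ≠ 0 := by intro h; rw [h] at hv0norm; simp at hv0norm
  have hm : 0 < nrm v0 := by
    rcases lt_or_eq_of_le (nn v0) with h | h
    · exact h
    · exact absurd (nrm_eq_zero v0 h.symm) hv0ne
  refine ⟨nrm v0, hm, fun v => ?_⟩
  rcases eq_or_ne v 0 with rfl | hv
  · simp only [norm_zero, mul_zero]; exact nn 0
  · have hvn : (0:ℝ) < ‖v‖ := norm_pos_iff.mpr hv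
    have hmem : ‖v‖⁻¹ • v ∈ Metric.sphere (0 : Fin d → ℝ) 1 := by
      simp [norm_smul, abs_of_pos (inv_pos.mpr hvn), inv_mul_cancel₀ hvn.ne']
    have h2 : nrm (‖v‖⁻¹ • v) = ‖v‖⁻¹ * nrm v := by
      rw [nrm_smul, abs_of_pos (inv_pos.mpr hvn)]
    have hle : nrm v0 ≤ ‖v‖⁻¹ * nrm v := h2 ▸ hv0min hmem
    calc nrm v0 * ‖v‖ ≤ (‖v‖⁻¹ * nrm v) * ‖v‖ :=
          mul_le_mul_of_nonneg_right hle hvn.le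
      _ = nrm v := by field_simp

private lemma nrm_vol_ball {d : ℕ} (hd : 1 ≤ d) (nrm : (Fin d → ℝ) → ℝ)
    (nrm_smul : ∀ (t : ℝ) (v : Fin d → ℝ), nrm (t • v) = |t| * nrm v)
    (nn : ∀ v, 0 ≤ nrm v) :
    ∀ u : ℝ, (volume {a : Fin d → ℝ | nrm a < u}).toReal
      = (max u 0)^d * (volume {a : Fin d → ℝ | nrm a < 1}).toReal := by
  intro u
  rcases le_or_gt u 0 with hu | hu
  · have : {a : Fin d → ℝ | nrm a < u} = ∅ := by
      ext a; simp only [mem_setOf_eq, mem_empty_iff_false, iff_false, not_lt]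
      exact le_trans hu (nn a)
    rw [this, max_eq_right hu]
    simp [zero_pow (by omega : d ≠ 0)]
  · have hset : {a : Fin d → ℝ | nrm a < u} = u • {a : Fin d → ℝ | nrm a < 1} := by
      ext a
      rw [mem_smul_set_iff_inv_smul_mem₀ hu.ne']
      simp only [mem_setOf_eq, nrm_smul, abs_of_pos (inv_pos.mpr hu)]
      rw [inv_mul_lt_iff₀ hu, mul_one]
    rw [hset, Measure.addHaar_smul, Module.finrank_fin_fun,
      abs_of_nonneg (pow_nonneg hu.le _), max_eq_left hu.le,
      ENNReal.toReal_mul, ENNReal.toReal_ofReal (pow_nonneg hu.le _)]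

private lemma nrm_ball_integral {d : ℕ} (hd : 1 ≤ d) (nrm : (Fin d → ℝ) → ℝ)
    (nn : ∀ v, 0 ≤ nrm v) (hcont : Continuous nrm)
    (m : ℝ) (hm : 0 < m) (hlow : ∀ v, m * ‖v‖ ≤ nrm v)
    (volform : ∀ u : ℝ, (volume {a : Fin d → ℝ | nrm a < u}).toReal
      = (max u 0)^d * (volume {a : Fin d → ℝ | nrm a < 1}).toReal)
    (r s : ℝ) (hr : 0 < r) (hs : 0 < s) (hsr : s ≤ r) :
    ∫ a in {a : Fin d → ℝ | nrm a < s}, (r - nrm a) ∂volume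
      = (s^d * (r-s) + s^(d+1)/(d+1)) * (volume {a : Fin d → ℝ | nrm a < 1}).toReal := by
  set Vr := (volume {a : Fin d → ℝ | nrm a < 1}).toReal with hVr
  have hmeas : ∀ u : ℝ, MeasurableSet {a : Fin d → ℝ | nrm a < u} :=
    fun u => (isOpen_lt hcont continuous_const).measurableSet
  have hfin : volume {a : Fin d → ℝ | nrm a < s} ≠ ⊤ := by
    have hsub : {a : Fin d → ℝ | nrm a < s} ⊆ Metric.ball 0 (s / m) := by
      intro a ha
      simp only [Metric.mem_ball, dist_zero_right]
      rw [lt_div_iff₀ hm, mul_comm]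
      exact lt_of_le_of_lt (hlow a) ha
    exact ((measure_mono hsub).trans_lt measure_ball_lt_top).ne
  have hint : IntegrableOn (fun a => r - nrm a) {a : Fin d → ℝ | nrm a < s} volume := by
    apply Measure.integrableOn_of_bounded (M := r) hfin
      (continuous_const.sub hcont).aestronglyMeasurable
    filter_upwards [ae_restrict_mem (hmeas s)] with a ha
    have h1 : nrm a < s := ha
    have := nn a
    show ‖r - nrm a‖ ≤ r
    rw [Real.norm_eq_abs, abs_of_nonneg (by linarith)]
    linarith
  have hnn : 0 ≤ᵐ[volume.restrict {a : Fin d → ℝ | nrm a < s}] fun a => r - nrm a := by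
    filter_upwards [ae_restrict_mem (hmeas s)] with a ha
    have h1 : nrm a < s := ha
    simp only [Pi.zero_apply]
    linarith
  rw [Integrable.integral_eq_integral_meas_lt hint hnn]
  have hpt : ∀ t : ℝ,
      (volume.restrict {a : Fin d → ℝ | nrm a < s}) {a : Fin d → ℝ | t < r - nrm a}
        = volume {a : Fin d → ℝ | nrm a < min s (r - t)} := by
    intro t
    have hset : {a : Fin d → ℝ | t < r - nrm a} = {a : Fin d → ℝ | nrm a < r - t} := by
      ext a; simp only [mem_setOf_eq]; constructor <;> intro <;> linarith
    rw [hset, Measure.restrict_apply (hmeas (r - t))]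
    congr 1
    ext a
    simp only [mem_inter_iff, mem_setOf_eq, lt_min_iff, and_comm]
  have hint2 : (fun t : ℝ => ((volume.restrict {a : Fin d → ℝ | nrm a < s})
      {a : Fin d → ℝ | t < r - nrm a}).toReal)
      = fun t : ℝ => (max (min s (r - t)) 0)^d * Vr := by
    funext t
    rw [hpt t, volform]
  simp only [measureReal_def]
  rw [hint2, integral_mul_const]
  set φ : ℝ → ℝ := fun t => (max (min s (r - t)) 0)^d with hφ
  have hφc : Continuous φ :=
    ((continuous_const.min (continuous_const.sub continuous_id)).max continuous_const).pow d
  have h0 : EqOn φ (fun _ => (0:ℝ)) (Ioi r) := by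
    intro t ht
    have ht' : r - t < 0 := by simp only [mem_Ioi] at ht; linarith
    have : min s (r - t) ≤ 0 := le_trans (min_le_right _ _) ht'.le
    simp only [hφ, max_eq_right this]
    exact zero_pow (by omega)
  have hsplit : ∫ t in Ioi (0:ℝ), φ t = ∫ t in Ioc (0:ℝ) r, φ t := by
    rw [← Ioc_union_Ioi_eq_Ioi hr.le,
      setIntegral_union (Ioc_disjoint_Ioi le_rfl) measurableSet_Ioi
        (hφc.integrableOn_Ioc)
        ((integrableOn_congr_fun h0 measurableSet_Ioi).mpr (integrableOn_zero))]
    rw [setIntegral_congr_fun measurableSet_Ioi h0]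
    simp
  rw [hsplit, ← intervalIntegral.integral_of_le hr.le,
    ← intervalIntegral.integral_add_adjacent_intervals
      (a := 0) (b := r - s) (c := r)
      (hφc.intervalIntegrable _ _) (hφc.intervalIntegrable _ _)]
  have hpart1 : ∫ t in (0:ℝ)..(r - s), φ t = s ^ d * (r - s) := by
    rw [intervalIntegral.integral_congr (g := fun _ => s ^ d) ?_]
    · simp [smul_eq_mul]; ring
    · intro t ht
      rw [uIcc_of_le (by linarith)] at ht
      have h1 : s ≤ r - t := by
        have := ht.2; linarith [ht.1]
      simp only [hφ, min_eq_left h1, max_eq_left hs.le]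
  have hpart2 : ∫ t in (r - s)..r, φ t = s ^ (d + 1) / (d + 1) := by
    have heq : EqOn φ (fun t => (r - t) ^ d) (uIcc (r - s) r) := by
      intro t ht
      rw [uIcc_of_le (by linarith)] at ht
      have h1 : r - t ≤ s := by linarith [ht.1]
      have h2 : 0 ≤ r - t := by linarith [ht.2]
      simp only [hφ, min_eq_right h1, max_eq_left h2]
    rw [intervalIntegral.integral_congr heq,
      intervalIntegral.integral_comp_sub_left (fun u => u ^ d) r]
    simp [integral_pow]
  rw [hpart1, hpart2]

end Aux

/-- Example 2 distribution function in Lanchier–Li: for any norm on `ℝ^d` and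
`0 < s ≤ r`, the ratio of the integral of `r - ‖a - c‖` over `B(c, s)` to its
integral over `B(c, r)` equals `(s/r)^d (1 + d (1 - s/r))`; that is, if `X` has
density proportional to `r - ‖a - c‖` on `B(c, r)`, then
`P(‖X - c‖ < s) = (s/r)^d (1 + d (1 - s/r))`. -/
theorem ratio_integral_r_sub_norm_over_balls
    (d : ℕ) (hd : 1 ≤ d)
    (nrm : (Fin d → ℝ) → ℝ)
    (nrm_smul : ∀ (t : ℝ) (v : Fin d → ℝ), nrm (t • v) = |t| * nrm v)
    (nrm_triangle : ∀ v w : Fin d → ℝ, nrm (v + w) ≤ nrm v + nrm w)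
    (nrm_eq_zero : ∀ v : Fin d → ℝ, nrm v = 0 → v = 0)
    (c : Fin d → ℝ) (r : ℝ) (hr : 0 < r) :
    ∀ s : ℝ, 0 < s → s ≤ r →
      (∫ a in {a : Fin d → ℝ | nrm (a - c) < s}, (r - nrm (a - c)) ∂volume)
          / ∫ a in {a : Fin d → ℝ | nrm (a - c) < r}, (r - nrm (a - c)) ∂volume
        = (s / r) ^ d * (1 + d * (1 - s / r)) := by
  intro s hs hsr
  have nn : ∀ v, 0 ≤ nrm v := nrm_nonneg' nrm nrm_smul nrm_triangle
  have hcont : Continuous nrm := (nrm_lipschitz' nrm nrm_smul nrm_triangle).continuous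
  obtain ⟨m, hm, hlow⟩ := nrm_lower_bound hd nrm nrm_eq_zero nrm_smul hcont nn
  have volform := nrm_vol_ball hd nrm nrm_smul nn
  set Vr := (volume {a : Fin d → ℝ | nrm a < 1}).toReal with hVr
  -- translation invariance
  have hmeas : ∀ u : ℝ, MeasurableSet {a : Fin d → ℝ | nrm a < u} :=
    fun u => (isOpen_lt hcont continuous_const).measurableSet
  have hmeasc : ∀ u : ℝ, MeasurableSet {a : Fin d → ℝ | nrm (a - c) < u} :=
    fun u => (isOpen_lt (hcont.comp (continuous_id.sub continuous_const))
      continuous_const).measurableSet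
  have htrans : ∀ u : ℝ,
      ∫ a in {a : Fin d → ℝ | nrm (a - c) < u}, (r - nrm (a - c)) ∂volume
        = ∫ a in {a : Fin d → ℝ | nrm a < u}, (r - nrm a) ∂volume := by
    intro u
    rw [← integral_indicator (hmeasc u), ← integral_indicator (hmeas u)]
    have hfun : (fun a => Set.indicator {a : Fin d → ℝ | nrm (a - c) < u}
          (fun a => r - nrm (a - c)) a)
        = fun a => Set.indicator {a : Fin d → ℝ | nrm a < u} (fun x => r - nrm x) (a - c) := by
      funext a
      by_cases h : nrm (a - c) < u <;> simp [Set.indicator, h]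
    rw [hfun]
    exact integral_sub_right_eq_self
      (fun x => Set.indicator {a : Fin d → ℝ | nrm a < u} (fun x => r - nrm x) x) c
  rw [htrans s, htrans r,
    nrm_ball_integral hd nrm nn hcont m hm hlow volform r s hr hs hsr,
    nrm_ball_integral hd nrm nn hcont m hm hlow volform r r hr hr le_rfl]
  -- positivity of Vr
  have hVfin : volume {a : Fin d → ℝ | nrm a < 1} ≠ ⊤ := by
    have hsub : {a : Fin d → ℝ | nrm a < 1} ⊆ Metric.ball 0 (1 / m) := by
      intro a ha
      simp only [Metric.mem_ball, dist_zero_right]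
      rw [lt_div_iff₀ hm, mul_comm]
      exact lt_of_le_of_lt (hlow a) ha
    exact ((measure_mono hsub).trans_lt measure_ball_lt_top).ne
  have hVpos : 0 < Vr := by
    apply ENNReal.toReal_pos _ hVfin
    refine ((isOpen_lt hcont continuous_const).measure_pos volume ⟨0, ?_⟩).ne'
    simp only [Set.mem_setOf_eq, nrm_zero' nrm nrm_smul]
    norm_num
  have hd1 : ((d : ℝ) + 1) ≠ 0 := by positivity
  have hrd : r ^ d ≠ 0 := pow_ne_zero _ hr.ne'
  have hr0 : r ≠ 0 := hr.ne'
  have hV0 : Vr ≠ 0 := hVpos.ne'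
  rw [mul_div_mul_right _ _ hV0, div_pow]
  field_simp
  ring
end
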